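/- arXiv:1301.7150 — 3 statements merged into one kernel-verified Lean document; each statement's English description precedes it below -/
import Mathlib

section
/- Let A > 0 and B > 0 be real constants, and let k₊ = (−A + √(A² + 8B))/4 be the positive root of 2k² + A·k − B = 0. Then there is no twice differentiable function u : ℝ → ℝ satisfying u''(t) = A·u(t)·u'(t) + B·u(t)³ for all t ∈ ℝ with u'(0) < 0 and u'(0) + k₊·u(0)² > 0; that is, every such solution blows up in finite time. -/
open Real

/-!
Let `k₊ > 0 > k₋` be the roots of `2k² + Ak - B`. Along a solution, `g_k = u' + k u²` satisfies the
linear equation `g_k' = -2 k' u g_k`, where `{k, k'} = {k₊, k₋}`, so each `g_k` keeps the sign it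
has at `0`: `g₊ > 0 > g₋` for all time. Hence `H = -g₋ / (k₊ - k₋) ≤ u²`, and `φ = H^(-1/2)`
satisfies `φ' = k₊ u φ` with `|φ'| ≥ k₊`. A positive function on `ℝ` cannot have a continuous
derivative bounded away from `0`.
-/

theorem eq_exp_integral_mul_of_hasDerivAt {c g : ℝ → ℝ} (hc : Continuous c)
    (hg : ∀ t, HasDerivAt g (c t * g t) t) (t : ℝ) :
    g t = exp (∫ s in (0 : ℝ)..t, c s) * g 0 := by
  set V : ℝ → ℝ := fun t => ∫ s in (0 : ℝ)..t, c s
  have hV (t : ℝ) : HasDerivAt V (c t) t := (hc.integral_hasStrictDerivAt 0 t).hasDerivAt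
  have hconst (t : ℝ) : HasDerivAt (fun s => exp (-V s) * g s) 0 t := by
    have h : HasDerivAt (fun s => exp (-V s) * g s) _ t := (hV t).neg.exp.mul (hg t)
    convert h using 1
    ring
  have h := is_const_of_deriv_eq_zero (fun t => (hconst t).differentiableAt)
    (fun t => (hconst t).deriv) t 0
  simp only [V, intervalIntegral.integral_same, neg_zero, exp_zero, one_mul] at h
  rw [← h, exp_neg, mul_inv_cancel_left₀ (exp_pos _).ne']

theorem Continuous.neg_of_ne_zero {X : Type*} [TopologicalSpace X] [PreconnectedSpace X]
    {f : X → ℝ} (hf : Continuous f) (hne : ∀ x, f x ≠ 0) {a : X} (ha : f a < 0) (x : X) :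
    f x < 0 := by
  by_contra! hx
  obtain ⟨y, hy⟩ := intermediate_value_univ a x hf ⟨ha.le, hx⟩
  exact hne y hy

theorem exists_neg_of_hasDerivAt_le_neg {φ φ' : ℝ → ℝ} {c : ℝ}
    (hφ : ∀ t, HasDerivAt φ (φ' t) t) (hc : 0 < c) (hle : ∀ t, φ' t ≤ -c) :
    ∃ t, φ t < 0 := by
  by_contra! hnonneg
  set T := φ 0 / c + 1
  have hT : 0 ≤ T := by have := hnonneg 0; positivity
  have hdrop := image_sub_le_mul_sub_of_deriv_le (fun t => (hφ t).differentiableAt)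
    (fun t => (hφ t).deriv ▸ hle t) hT
  have hcT : c * T = φ 0 + c := by simp only [T]; field_simp
  linarith [hnonneg T]

theorem exists_neg_of_le_abs_hasDerivAt {φ φ' : ℝ → ℝ} {c : ℝ}
    (hφ : ∀ t, HasDerivAt φ (φ' t) t) (hφ' : Continuous φ') (hc : 0 < c)
    (hle : ∀ t, c ≤ |φ' t|) : ∃ t, φ t < 0 := by
  have hne (t : ℝ) : φ' t ≠ 0 := fun h => by simpa [h] using hc.trans_le (hle t)
  rcases (hne 0).lt_or_gt with h0 | h0
  · refine exists_neg_of_hasDerivAt_le_neg hφ hc fun t => ?_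
    have := hle t
    rw [abs_of_neg (hφ'.neg_of_ne_zero hne h0 t)] at this
    linarith
  · -- run time backwards
    have hpos (t : ℝ) : 0 < φ' t := by
      simpa using hφ'.neg.neg_of_ne_zero (fun t => neg_ne_zero.2 (hne t)) (neg_lt_zero.2 h0) t
    obtain ⟨t, ht⟩ := exists_neg_of_hasDerivAt_le_neg (φ := fun t => φ (-t))
      (φ' := fun t => -φ' (-t))
      (fun t => by simpa [Function.comp_def] using (hφ (-t)).scomp t (hasDerivAt_neg' t))
      hc fun t => by have := hle (-t); rw [abs_of_pos (hpos (-t))] at this; linarith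
    exact ⟨-t, ht⟩

/-- The paper's `g_k(u) = u' + k u²`. -/
noncomputable def riccatiDefect (k : ℝ) (u : ℝ → ℝ) (t : ℝ) : ℝ := deriv u t + k * u t ^ 2

section Riccati

variable {A B k l : ℝ} {u : ℝ → ℝ}

theorem hasDerivAt_riccatiDefect (hsum : 2 * (k + l) = -A) (hprod : 2 * k * l = -B) {t : ℝ}
    (hu : DifferentiableAt ℝ u t)
    (hode : HasDerivAt (deriv u) (A * u t * deriv u t + B * u t ^ 3) t) :
    HasDerivAt (riccatiDefect k u) (-2 * l * u t * riccatiDefect k u t) t := by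
  have h : HasDerivAt (riccatiDefect k u) _ t := hode.add (hu.hasDerivAt.pow 2 |>.const_mul k)
  convert h using 1
  simp only [riccatiDefect]
  linear_combination (-(u t * deriv u t)) * hsum - u t ^ 3 * hprod

theorem riccatiDefect_eq_exp_mul (hsum : 2 * (k + l) = -A) (hprod : 2 * k * l = -B)
    (hu : Differentiable ℝ u)
    (hode : ∀ t, HasDerivAt (deriv u) (A * u t * deriv u t + B * u t ^ 3) t) (t : ℝ) :
    riccatiDefect k u t = exp (∫ s in (0 : ℝ)..t, -2 * l * u s) * riccatiDefect k u 0 :=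
  eq_exp_integral_mul_of_hasDerivAt (continuous_const.mul hu.continuous)
    (fun t => hasDerivAt_riccatiDefect hsum hprod (hu t) (hode t)) t

theorem false_of_riccatiDefect_pos_of_neg (hsum : 2 * (k + l) = -A) (hprod : 2 * k * l = -B)
    (hk : 0 < k) (hlk : l < k) (hu : Differentiable ℝ u)
    (hode : ∀ t, HasDerivAt (deriv u) (A * u t * deriv u t + B * u t ^ 3) t)
    (hgk : 0 < riccatiDefect k u 0) (hgl : riccatiDefect l u 0 < 0) : False := by
  have hsum' : 2 * (l + k) = -A := by rw [add_comm]; exact hsum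
  have hprod' : 2 * l * k = -B := by rw [mul_right_comm]; exact hprod
  have hgk_pos (t : ℝ) : 0 < riccatiDefect k u t := by
    rw [riccatiDefect_eq_exp_mul hsum hprod hu hode]; positivity
  have hgl_neg (t : ℝ) : riccatiDefect l u t < 0 := by
    rw [riccatiDefect_eq_exp_mul hsum' hprod' hu hode]
    exact mul_neg_of_pos_of_neg (exp_pos _) hgl
  set H : ℝ → ℝ := fun t => -riccatiDefect l u t / (k - l)
  have hH_pos (t : ℝ) : 0 < H t := div_pos (neg_pos.2 (hgl_neg t)) (sub_pos.2 hlk)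
  have hH_le (t : ℝ) : H t ≤ u t ^ 2 := by
    have := hgk_pos t
    simp only [H, riccatiDefect] at this ⊢
    rw [div_le_iff₀ (sub_pos.2 hlk)]
    linarith
  have hH (t : ℝ) : HasDerivAt H (-2 * k * u t * H t) t := by
    have h : HasDerivAt H _ t :=
      (hasDerivAt_riccatiDefect hsum' hprod' (hu t) (hode t)).neg.div_const (k - l)
    convert h using 1
    simp only [H]; ring
  set φ : ℝ → ℝ := fun t => (√(H t))⁻¹
  have hφ_pos (t : ℝ) : 0 < φ t := inv_pos.2 (sqrt_pos.2 (hH_pos t))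
  have hφ (t : ℝ) : HasDerivAt φ (k * u t * φ t) t := by
    have hsqrt := sqrt_pos.2 (hH_pos t)
    have h : HasDerivAt φ _ t := ((hH t).sqrt (hH_pos t).ne').inv hsqrt.ne'
    convert h using 1
    simp only [φ]
    rw [sq_sqrt (hH_pos t).le]
    field_simp [(hH_pos t).ne']
  have hφ_cont : Continuous φ := continuous_iff_continuousAt.2 fun t => (hφ t).continuousAt
  obtain ⟨t, ht⟩ := exists_neg_of_le_abs_hasDerivAt hφ
    ((continuous_const.mul hu.continuous).mul hφ_cont) hk fun t => by
    have hone : 1 ≤ |u t| * φ t := by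
      rw [← div_eq_mul_inv, one_le_div (sqrt_pos.2 (hH_pos t)), ← sqrt_sq_eq_abs]
      exact sqrt_le_sqrt (hH_le t)
    rw [mul_assoc, abs_mul, abs_mul, abs_of_pos hk, abs_of_pos (hφ_pos t)]
    exact le_mul_of_one_le_right hk.le hone
  exact (hφ_pos t).not_gt ht

end Riccati

theorem stmt_9_general (A B : ℝ) (hB : 0 < B)
    (kp : ℝ) (hkp : kp = (-A + Real.sqrt (A ^ 2 + 8 * B)) / 4) :
    ¬ ∃ u : ℝ → ℝ, Differentiable ℝ u ∧ Differentiable ℝ (deriv u) ∧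
      (∀ t, deriv (deriv u) t = A * u t * deriv u t + B * (u t) ^ 3) ∧
      deriv u 0 < 0 ∧ deriv u 0 + kp * (u 0) ^ 2 > 0 := by
  rintro ⟨u, hu, hu', hode, hd0, hg0⟩
  set D := √(A ^ 2 + 8 * B)
  have hD : D ^ 2 = A ^ 2 + 8 * B := sq_sqrt (by positivity)
  set km := (-A - D) / 4
  have hsum : 2 * (kp + km) = -A := by rw [hkp]; ring
  have hprod : 2 * kp * km = -B := by rw [hkp]; linear_combination -hD / 8
  have hkp_pos : 0 < kp := by rw [hkp]; nlinarith [sqrt_nonneg (A ^ 2 + 8 * B)]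
  have hkm_neg : km < 0 := by nlinarith
  refine false_of_riccatiDefect_pos_of_neg hsum hprod hkp_pos (by linarith) hu
    (fun t => hode t ▸ (hu' t).hasDerivAt) hg0 ?_
  simp only [riccatiDefect]
  nlinarith [sq_nonneg (u 0)]

/-- A > 0, B > 0: no global solution with u'(0) < 0 and g_{k₊}(u(0)) > 0. -/
theorem stmt_9 (A B : ℝ) (hA : 0 < A) (hB : 0 < B)
    (kp : ℝ) (hkp : kp = (-A + Real.sqrt (A ^ 2 + 8 * B)) / 4) :
    ¬ ∃ u : ℝ → ℝ, Differentiable ℝ u ∧ Differentiable ℝ (deriv u) ∧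
      (∀ t, deriv (deriv u) t = A * u t * deriv u t + B * (u t) ^ 3) ∧
      deriv u 0 < 0 ∧ deriv u 0 + kp * (u 0) ^ 2 > 0 :=
  stmt_9_general A B hB kp hkp
end

section
/- Let A > 0 and B > 0 be real constants. If u : ℝ → ℝ is a twice differentiable function satisfying u''(t) = A·u(t)·u'(t) + B·u(t)³ for all t ∈ ℝ, then u is identically zero. Consequently, for each integer m with 5 ≤ m ≤ 7, every positive three-times differentiable global solution f : ℝ → ℝ of f²·f''' − (2(m+1)/(m−2))·f·f'·f'' + (m²/(m−2)²)·f'³ = 0 is constant. -/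
/-!
Since `B > 0`, `2c² - Ac - B = 2(c - a)(c - b)` with `a < 0 < b`. Along a solution the defects
`P = u' - b u²` and `Q = u' - a u²` satisfy the linear equations `P' = 2a u P` and `Q' = 2b u Q`,
so each has constant sign. If `P ≥ 0` (resp. `Q ≤ 0`) then `u' ≥ b u²` (resp. `u' ≤ a u²`), and
a nonzero global solution of such a Riccati inequality blows up forward or backward in time, so
`u ≡ 0`. Otherwise `a u² < u' < b u²`, so `u` never vanishes and `w = Q / u` satisfies
`w' ≥ b / (b - a) · w²` with `w ≠ 0`, which blows up in the same way.

For (1.1), the Cole–Hopf substitution `u = f'/f` turns `f² f''' - α f f' f'' + β f'³ = 0` into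
`u'' = (α - 3) u u' + (α - 1 - β) u³`; for `α = 2(m+1)/(m-2)`, `β = m²/(m-2)²` the last
coefficient is `2(m-4)/(m-2)² > 0`, so `f' = u f ≡ 0`.
-/

open Set Real

theorem HasDerivAt.comp_neg {f : ℝ → ℝ} {f' x : ℝ} (hf : HasDerivAt f f' (-x)) :
    HasDerivAt (fun s => f (-s)) (-f') x := by
  simpa [Function.comp_def] using hf.comp x (hasDerivAt_neg x)

theorem false_of_sq_le_deriv {w w' : ℝ → ℝ} {σ t₀ : ℝ} (hσ : 0 < σ)
    (hw : ∀ t, HasDerivAt w (w' t) t) (hle : ∀ t, σ * w t ^ 2 ≤ w' t) (h₀ : 0 < w t₀) :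
    False := by
  have hmono : Monotone w :=
    monotone_of_hasDerivAt_nonneg hw fun t => (by positivity : 0 ≤ σ * w t ^ 2).trans (hle t)
  have hpos : ∀ t ∈ Ici t₀, 0 < w t := fun t ht => h₀.trans_le (hmono ht)
  -- `1 / w` decreases at least at rate `σ` but stays positive
  have hanti : AntitoneOn (fun t => (w t)⁻¹ + σ * t) (Ici t₀) := by
    have hderiv : ∀ t ∈ Ici t₀,
        HasDerivAt (fun t => (w t)⁻¹ + σ * t) (-w' t / w t ^ 2 + σ) t := fun t ht =>
      ((hw t).inv (hpos t ht).ne').add (by simpa using (hasDerivAt_id t).const_mul σ)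
    refine antitoneOn_of_hasDerivWithinAt_nonpos (convex_Ici t₀)
      (fun t ht => (hderiv t ht).continuousAt.continuousWithinAt)
      (fun t ht => (hderiv t (interior_subset ht)).hasDerivWithinAt) fun t ht => ?_
    have hsq := pow_pos (hpos t (interior_subset ht)) 2
    rw [neg_div, neg_add_le_iff_le_add, add_zero, le_div_iff₀ hsq]
    linarith [hle t]
  set T := t₀ + (w t₀)⁻¹ / σ
  have hT : t₀ ≤ T := le_add_of_nonneg_right (by positivity)
  have hdecr : (w T)⁻¹ + σ * T ≤ (w t₀)⁻¹ + σ * t₀ := hanti self_mem_Ici hT hT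
  have hσT : σ * T = σ * t₀ + (w t₀)⁻¹ := by simp only [T]; field_simp
  linarith [inv_pos.2 (hpos T hT)]

theorem eq_zero_of_sq_le_deriv {w w' : ℝ → ℝ} {σ : ℝ} (hσ : 0 < σ)
    (hw : ∀ t, HasDerivAt w (w' t) t) (hle : ∀ t, σ * w t ^ 2 ≤ w' t) (t : ℝ) :
    w t = 0 := by
  rcases lt_trichotomy (w t) 0 with h | h | h
  · refine (false_of_sq_le_deriv hσ (w := fun s => -w (-s)) (w' := fun s => w' (-s))
      (fun s => ?_) (fun s => by simpa using hle (-s)) (t₀ := -t) (by simpa using h)).elim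
    simpa using (hw (-s)).comp_neg.fun_neg
  · exact h
  · exact (false_of_sq_le_deriv hσ hw hle h).elim

theorem eq_zero_of_deriv_le_sq {w w' : ℝ → ℝ} {σ : ℝ} (hσ : σ < 0)
    (hw : ∀ t, HasDerivAt w (w' t) t) (hle : ∀ t, w' t ≤ σ * w t ^ 2) (t : ℝ) :
    w t = 0 := by
  simpa using eq_zero_of_sq_le_deriv (neg_pos.2 hσ) (w := fun s => w (-s))
    (w' := fun s => -w' (-s)) (fun s => (hw (-s)).comp_neg) (fun s => by linarith [hle (-s)]) (-t)

theorem eq_mul_exp_integral_of_hasDerivAt {y g : ℝ → ℝ} (hg : Continuous g)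
    (hy : ∀ t, HasDerivAt y (g t * y t) t) (t : ℝ) :
    y t = y 0 * exp (∫ s in (0 : ℝ)..t, g s) := by
  set G : ℝ → ℝ := fun t => ∫ s in (0 : ℝ)..t, g s
  have hd : ∀ s, HasDerivAt (fun t => y t * exp (-G t)) 0 s := fun s =>
    ((hy s).mul (hg.integral_hasStrictDerivAt 0 s).hasDerivAt.neg.exp).congr_deriv (by ring)
  have hconst : ∀ t, y t * exp (-G t) = y 0 * exp (-G 0) := fun t =>
    is_const_of_deriv_eq_zero (fun s => (hd s).differentiableAt) (fun s => (hd s).deriv) t 0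
  have h := hconst t
  simp only [G, intervalIntegral.integral_same, neg_zero, exp_zero, mul_one, exp_neg] at h
  rw [← h, inv_mul_cancel_right₀ (exp_pos _).ne']

theorem nonneg_or_neg_of_hasDerivAt_mul {y g : ℝ → ℝ} (hg : Continuous g)
    (hy : ∀ t, HasDerivAt y (g t * y t) t) : (∀ t, 0 ≤ y t) ∨ ∀ t, y t < 0 := by
  rcases le_or_gt 0 (y 0) with h | h
  · exact .inl fun t => eq_mul_exp_integral_of_hasDerivAt hg hy t ▸ by positivity
  · exact .inr fun t =>
      eq_mul_exp_integral_of_hasDerivAt hg hy t ▸ mul_neg_of_neg_of_pos h (exp_pos _)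

theorem exists_vieta_neg_pos (A : ℝ) {B : ℝ} (hB : 0 < B) :
    ∃ a b : ℝ, a < 0 ∧ 0 < b ∧ A = 2 * (a + b) ∧ B = -2 * a * b := by
  obtain ⟨D, hD, hD2⟩ : ∃ D : ℝ, 0 < D ∧ D ^ 2 = A ^ 2 + 8 * B :=
    ⟨√(A ^ 2 + 8 * B), by positivity, sq_sqrt (by positivity)⟩
  refine ⟨(A - D) / 4, (A + D) / 4, ?_, ?_, by ring, by linear_combination -hD2 / 8⟩ <;>
    nlinarith

theorem hasDerivAt_sub_mul_sq {u v : ℝ → ℝ} {A B a b t : ℝ} (hA : A = 2 * (a + b))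
    (hB : B = -2 * a * b) (hu : HasDerivAt u (v t) t)
    (hv : HasDerivAt v (A * u t * v t + B * u t ^ 3) t) :
    HasDerivAt (fun s => v s - b * u s ^ 2) (2 * a * u t * (v t - b * u t ^ 2)) t := by
  refine (hv.sub ((hu.pow 2).const_mul b)).congr_deriv ?_
  subst hA hB
  push_cast
  ring

theorem false_of_mul_sq_lt_deriv_lt_mul_sq {u v : ℝ → ℝ} {a b : ℝ} (hb : 0 < b)
    (hab : a < b) (hu : ∀ t, HasDerivAt u (v t) t)
    (hQ : ∀ t, HasDerivAt (fun s => v s - a * u s ^ 2) (2 * b * u t * (v t - a * u t ^ 2)) t)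
    (hlt : ∀ t, v t < b * u t ^ 2) (hgt : ∀ t, a * u t ^ 2 < v t) : False := by
  have hu0 : ∀ t, u t ≠ 0 := fun t h => by simpa [h] using (hgt t).trans (hlt t)
  -- the Riccati inequality `w' ≥ b / (b - a) · w²` for `w = (u' - a u²) / u`
  have hriccati : ∀ t, b / (b - a) * ((v t - a * u t ^ 2) / u t) ^ 2 ≤
      (2 * b * u t * (v t - a * u t ^ 2) * u t - (v t - a * u t ^ 2) * v t) / u t ^ 2 := by
    intro t
    rw [div_pow, ← mul_div_assoc]
    gcongr
    rw [div_mul_eq_mul_div, div_le_iff₀ (sub_pos.2 hab)]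
    have h2ba : 0 < 2 * b - a := by linarith
    nlinarith [mul_pos (mul_pos (sub_pos.2 (hgt t)) (sub_pos.2 (hlt t))) h2ba]
  have hw0 := eq_zero_of_sq_le_deriv (div_pos hb (sub_pos.2 hab))
    (fun t => (hQ t).div (hu t) (hu0 t)) hriccati 0
  rw [Pi.div_apply, div_eq_zero_iff, sub_eq_zero] at hw0
  exact hw0.elim (hgt 0).ne' (hu0 0)

theorem eq_zero_of_hasDerivAt_mul_add_pow_three {A B : ℝ} (hB : 0 < B) {u v : ℝ → ℝ}
    (hu : ∀ t, HasDerivAt u (v t) t) (hv : ∀ t, HasDerivAt v (A * u t * v t + B * u t ^ 3) t)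
    (t : ℝ) : u t = 0 := by
  obtain ⟨a, b, ha, hb, hAab, hBab⟩ := exists_vieta_neg_pos A hB
  have hP := fun t => hasDerivAt_sub_mul_sq hAab hBab (hu t) (hv t)
  have hQ := fun t => hasDerivAt_sub_mul_sq (a := b) (b := a) (by rw [hAab]; ring)
    (by rw [hBab]; ring) (hu t) (hv t)
  have hcont : Continuous u := continuous_iff_continuousAt.2 fun t => (hu t).continuousAt
  rcases nonneg_or_neg_of_hasDerivAt_mul (continuous_const.mul hcont) hP with hP' | hP'
  · exact eq_zero_of_sq_le_deriv hb hu (fun t => by linarith [hP' t]) t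
  rcases nonneg_or_neg_of_hasDerivAt_mul (continuous_const.mul hcont)
    (fun t => ((hQ t).fun_neg).congr_deriv (mul_neg _ _).symm) with hQ' | hQ'
  · exact eq_zero_of_deriv_le_sq ha hu (fun t => by linarith [hQ' t]) t
  · exact (false_of_mul_sq_lt_deriv_lt_mul_sq hb (ha.trans hb) hu hQ (fun t => by linarith [hP' t])
      (fun t => by linarith [hQ' t])).elim

theorem coleHopf_hasDerivAt {a b : ℝ} {f f₁ f₂ f₃ : ℝ → ℝ} (hf : ∀ t, f t ≠ 0)
    (h₁ : ∀ t, HasDerivAt f (f₁ t) t) (h₂ : ∀ t, HasDerivAt f₁ (f₂ t) t)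
    (h₃ : ∀ t, HasDerivAt f₂ (f₃ t) t)
    (heq : ∀ t, f t ^ 2 * f₃ t - a * f t * f₁ t * f₂ t + b * f₁ t ^ 3 = 0) :
    (∀ t, HasDerivAt (fun s => f₁ s / f s) (f₂ t / f t - (f₁ t / f t) ^ 2) t) ∧
    ∀ t, HasDerivAt (fun s => f₂ s / f s - (f₁ s / f s) ^ 2)
      ((a - 3) * (f₁ t / f t) * (f₂ t / f t - (f₁ t / f t) ^ 2)
        + (a - 1 - b) * (f₁ t / f t) ^ 3) t := by
  have hu : ∀ t, HasDerivAt (fun s => f₁ s / f s) (f₂ t / f t - (f₁ t / f t) ^ 2) t :=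
    fun t => ((h₂ t).fun_div (h₁ t) (hf t)).congr_deriv (by field_simp)
  refine ⟨hu, fun t =>
    (((h₃ t).fun_div (h₁ t) (hf t)).sub ((hu t).fun_pow 2)).congr_deriv ?_⟩
  have := hf t
  push_cast
  field_simp
  linear_combination heq t

theorem apply_eq_apply_of_coleHopf {a b : ℝ} (hab : 0 < a - 1 - b) {f : ℝ → ℝ}
    (hf : ∀ t, f t ≠ 0) (h₁ : Differentiable ℝ f) (h₂ : Differentiable ℝ (deriv f))
    (h₃ : Differentiable ℝ (deriv (deriv f)))
    (heq : ∀ t, f t ^ 2 * deriv (deriv (deriv f)) t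
      - a * f t * deriv f t * deriv (deriv f) t + b * deriv f t ^ 3 = 0) (s t : ℝ) :
    f s = f t := by
  obtain ⟨hu, hv⟩ := coleHopf_hasDerivAt hf (fun t => (h₁ t).hasDerivAt)
    (fun t => (h₂ t).hasDerivAt) (fun t => (h₃ t).hasDerivAt) heq
  have hzero := eq_zero_of_hasDerivAt_mul_add_pow_three hab hu hv
  exact is_const_of_deriv_eq_zero h₁
    (fun t => (div_eq_zero_iff.1 (hzero t)).resolve_right (hf t)) s t

theorem stmt_10_general (A B : ℝ) (hB : 0 < B) :
    (∀ u : ℝ → ℝ, Differentiable ℝ u → Differentiable ℝ (deriv u) →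
      (∀ t, deriv (deriv u) t = A * u t * deriv u t + B * (u t) ^ 3) →
      ∀ t, u t = 0)
    ∧
    (∀ m : ℤ, 5 ≤ m → m ≤ 7 →
      ∀ f : ℝ → ℝ, (∀ t, 0 < f t) →
        Differentiable ℝ f → Differentiable ℝ (deriv f) →
        Differentiable ℝ (deriv (deriv f)) →
        (∀ t, (f t) ^ 2 * deriv (deriv (deriv f)) t
          - (2 * ((m:ℝ) + 1) / ((m:ℝ) - 2)) * f t * deriv f t * deriv (deriv f) t
          + ((m:ℝ) ^ 2 / ((m:ℝ) - 2) ^ 2) * (deriv f t) ^ 3 = 0) →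
        ∀ s t, f s = f t) := by
  refine ⟨fun u h₁ h₂ hode => eq_zero_of_hasDerivAt_mul_add_pow_three hB
    (fun t => (h₁ t).hasDerivAt) fun t => hode t ▸ (h₂ t).hasDerivAt, ?_⟩
  intro m hm _ f hf h₁ h₂ h₃ heq
  have hm : (4 : ℝ) < m := by exact_mod_cast hm
  have hcoeff : 2 * ((m : ℝ) + 1) / (m - 2) - 1 - m ^ 2 / (m - 2) ^ 2
      = 2 * (m - 4) / (m - 2) ^ 2 := by
    have : (m : ℝ) - 2 ≠ 0 := by linarith
    field_simp
    ring
  refine apply_eq_apply_of_coleHopf ?_ (fun t => (hf t).ne') h₁ h₂ h₃ heq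
  rw [hcoeff]
  exact div_pos (by linarith) (pow_pos (by linarith) 2)

/-- A > 0, B > 0: only the trivial global solution; consequently for
5 ≤ m ≤ 7 every positive global solution of (1.1) is constant. -/
theorem stmt_10 (A B : ℝ) (hA : 0 < A) (hB : 0 < B) :
    (∀ u : ℝ → ℝ, Differentiable ℝ u → Differentiable ℝ (deriv u) →
      (∀ t, deriv (deriv u) t = A * u t * deriv u t + B * (u t) ^ 3) →
      ∀ t, u t = 0)
    ∧
    (∀ m : ℤ, 5 ≤ m → m ≤ 7 →
      ∀ f : ℝ → ℝ, (∀ t, 0 < f t) →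
        Differentiable ℝ f → Differentiable ℝ (deriv f) →
        Differentiable ℝ (deriv (deriv f)) →
        (∀ t, (f t) ^ 2 * deriv (deriv (deriv f)) t
          - (2 * ((m:ℝ) + 1) / ((m:ℝ) - 2)) * f t * deriv f t * deriv (deriv f) t
          + ((m:ℝ) ^ 2 / ((m:ℝ) - 2) ^ 2) * (deriv f t) ^ 3 = 0) →
        ∀ s t, f s = f t) :=
  stmt_10_general A B hB
end

section
/- Let A < 0 and B > 0 be real constants. If u : ℝ → ℝ is a twice differentiable function satisfying u''(t) = A·u(t)·u'(t) + B·u(t)³ for all t ∈ ℝ, then u is identically zero. Consequently, for each integer m ≥ 9, every positive three-times differentiable global solution f : ℝ → ℝ of f²·f''' − (2(m+1)/(m−2))·f·f'·f'' + (m²/(m−2)²)·f'³ = 0 is constant. -/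
/-!
For each root `c` of `2c² + Ac = B` the function `g = u' + c u²` solves the linear equation
`g' = (A + 2c) u g`, so `g = K exp ((A + 2c) U)` with `U' = u`; since `B > 0` there is a root
`c₁ < 0` and a root `c₂ > 0` with `A + 2c₂ > 0`. If the constant for `c₂` is `≤ 0`, or the one for
`c₁` is `≥ 0`, then `u' ≤ -c₂ u²` or `u' ≥ -c₁ u²`, and a nonzero global solution of such a
Riccati inequality blows up in finite time. Otherwise `(c₂ - c₁) u² ≥ K exp ((A + 2c₂) U)`, so `u`
has a fixed sign and `exp (-(A + 2c₂) U / 2)` is a positive function whose derivative is bounded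
away from zero, which is impossible on the whole line.

The Cole–Hopf substitution `u = f'/f` turns `f² f''' - k₁ f f' f'' + k₂ f'³ = 0` into
`u'' = (k₁ - 3) u u' + (k₁ - k₂ - 1) u³`, which for (1.1) is (5.6).
-/

open Real Set

theorem exists_nonpos_of_hasDerivAt_le_neg {f f' : ℝ → ℝ} {c t₀ : ℝ} (hc : 0 < c)
    (hf : ∀ t ∈ Ici t₀, HasDerivAt f (f' t) t) (hf' : ∀ t ∈ Ici t₀, f' t ≤ -c) :
    ∃ t ∈ Ici t₀, f t ≤ 0 := by
  by_contra! hpos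
  have ht₁ : t₀ + f t₀ / c ∈ Ici t₀ := by
    simpa using (div_pos (hpos t₀ self_mem_Ici) hc).le
  have hmvt := (convex_Ici t₀).image_sub_le_mul_sub_of_deriv_le
    (fun t ht => (hf t ht).continuousAt.continuousWithinAt)
    (fun t ht => (hf t (interior_subset ht)).differentiableAt.differentiableWithinAt)
    (fun t ht => (hf t (interior_subset ht)).deriv ▸ hf' t (interior_subset ht))
    t₀ self_mem_Ici _ ht₁ ht₁
  have hslope : -c * (t₀ + f t₀ / c - t₀) = -f t₀ := by field_simp; ring
  linarith [hpos _ ht₁]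

theorem exists_nonpos_of_le_hasDerivAt {f f' : ℝ → ℝ} {c t₀ : ℝ} (hc : 0 < c)
    (hf : ∀ t ∈ Iic t₀, HasDerivAt f (f' t) t) (hf' : ∀ t ∈ Iic t₀, c ≤ f' t) :
    ∃ t ∈ Iic t₀, f t ≤ 0 := by
  by_contra! hpos
  have ht₁ : t₀ - f t₀ / c ∈ Iic t₀ := by
    simpa using (div_pos (hpos t₀ self_mem_Iic) hc).le
  have hmvt := (convex_Iic t₀).mul_sub_le_image_sub_of_le_deriv
    (fun t ht => (hf t ht).continuousAt.continuousWithinAt)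
    (fun t ht => (hf t (interior_subset ht)).differentiableAt.differentiableWithinAt)
    (fun t ht => (hf t (interior_subset ht)).deriv ▸ hf' t (interior_subset ht))
    _ ht₁ t₀ self_mem_Iic ht₁
  have hslope : c * (t₀ - (t₀ - f t₀ / c)) = f t₀ := by field_simp; ring
  linarith [hpos _ ht₁]

theorem eq_zero_of_deriv_le_neg_mul_sq {f : ℝ → ℝ} {c : ℝ} (hc : 0 < c)
    (hf : Differentiable ℝ f) (h : ∀ t, deriv f t ≤ -c * f t ^ 2) (t : ℝ) : f t = 0 := by
  have hanti : Antitone f := antitone_of_deriv_nonpos hf fun t =>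
    (h t).trans (by nlinarith [sq_nonneg (f t)])
  rcases lt_trichotomy (f t) 0 with hneg | hzero | hpos
  · -- `-1/f` stays positive on `[t, ∞)` but decreases at rate at least `c`.
    have hlt : ∀ s ∈ Ici t, f s < 0 := fun s hs => (hanti hs).trans_lt hneg
    obtain ⟨s, hs, hle⟩ := exists_nonpos_of_hasDerivAt_le_neg (f := fun s => -(f s)⁻¹) hc
      (fun s hs => ((hf s).hasDerivAt.inv (hlt s hs).ne).neg)
      (fun s hs => by
        rw [neg_div, neg_neg, div_le_iff₀ (by nlinarith [hlt s hs])]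
        linarith [h s])
    exact absurd hle (neg_pos.2 (inv_lt_zero.2 (hlt s hs))).not_ge
  · exact hzero
  · have hgt : ∀ s ∈ Iic t, 0 < f s := fun s hs => hpos.trans_le (hanti hs)
    obtain ⟨s, hs, hle⟩ := exists_nonpos_of_le_hasDerivAt (f := fun s => (f s)⁻¹) hc
      (fun s hs => (hf s).hasDerivAt.inv (hgt s hs).ne')
      (fun s hs => by
        rw [le_div_iff₀ (by nlinarith [hgt s hs])]
        linarith [h s])
    exact absurd hle (inv_pos.2 (hgt s hs)).not_ge

theorem exists_eq_mul_exp_of_hasDerivAt {g a a' : ℝ → ℝ}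
    (hg : ∀ t, HasDerivAt g (a' t * g t) t) (ha : ∀ t, HasDerivAt a (a' t) t) :
    ∃ K, ∀ t, g t = K * exp (a t) := by
  have hconst : ∀ t, HasDerivAt (fun t => g t * exp (-a t)) 0 t := fun t =>
    ((hg t).mul (ha t).neg.exp).congr_deriv (by ring)
  refine ⟨g 0 * exp (-a 0), fun t => ?_⟩
  rw [← is_const_of_deriv_eq_zero (fun t => (hconst t).differentiableAt)
    (fun t => (hconst t).deriv) t 0, mul_assoc, ← exp_add, neg_add_cancel, exp_zero, mul_one]

theorem false_of_mul_exp_le_sq {u U : ℝ → ℝ} {κ γ : ℝ} (hκ : 0 < κ) (hγ : 0 < γ)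
    (hu : Continuous u) (hU : ∀ t, HasDerivAt U (u t) t)
    (h : ∀ t, κ * exp (γ * U t) ≤ u t ^ 2) : False := by
  have hne : ∀ t, u t ≠ 0 := fun t h0 => by
    have := h t
    rw [h0] at this
    linarith [mul_pos hκ (exp_pos (γ * U t))]
  -- `W = exp (-γ U / 2)` is positive and `|W'| = γ |u| W / 2 ≥ γ √κ / 2`.
  set W := fun t => exp (-(γ / 2) * U t)
  have hW : ∀ t, HasDerivAt W (-(γ / 2) * (u t * W t)) t := fun t =>
    ((hU t).const_mul (-(γ / 2))).exp.congr_deriv (by ring)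
  have hbound : ∀ t, √κ ≤ |u t * W t| := fun t => by
    rw [← sqrt_sq_eq_abs]
    refine sqrt_le_sqrt ?_
    have hexp : exp (γ * U t) * W t ^ 2 = 1 := by
      rw [← exp_nat_mul, ← exp_add]; ring_nf; exact exp_zero
    nlinarith [h t, sq_nonneg (W t)]
  have hsign : (∀ t, 0 < u t) ∨ (∀ t, u t < 0) := by
    by_contra! hmixed
    obtain ⟨⟨t₁, h₁⟩, t₂, h₂⟩ := hmixed
    obtain ⟨t, ht⟩ := intermediate_value_univ t₁ t₂ hu ⟨h₁, h₂⟩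
    exact hne t ht
  rcases hsign with hpos | hneg
  · obtain ⟨t, -, ht⟩ := exists_nonpos_of_hasDerivAt_le_neg (t₀ := 0)
      (mul_pos (half_pos hγ) (sqrt_pos.2 hκ)) (fun t _ => hW t) fun t _ => by
        have := hbound t
        rw [abs_of_pos (mul_pos (hpos t) (exp_pos _))] at this
        nlinarith
    exact (exp_pos _).not_ge ht
  · obtain ⟨t, -, ht⟩ := exists_nonpos_of_le_hasDerivAt (t₀ := 0)
      (mul_pos (half_pos hγ) (sqrt_pos.2 hκ)) (fun t _ => hW t) fun t _ => by
        have := hbound t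
        rw [abs_of_neg (mul_neg_of_neg_of_pos (hneg t) (exp_pos _))] at this
        nlinarith
    exact (exp_pos _).not_ge ht

theorem exists_roots_two_mul_sq_add_mul {A B : ℝ} (hB : 0 < B) :
    ∃ c₁ c₂ : ℝ, c₁ < 0 ∧ 0 < c₂ ∧ 0 < A + 2 * c₂ ∧
      2 * c₁ ^ 2 + A * c₁ = B ∧ 2 * c₂ ^ 2 + A * c₂ = B := by
  set s := √(A ^ 2 + 8 * B)
  have hs : s ^ 2 = A ^ 2 + 8 * B := sq_sqrt (by positivity)
  have habs : |A| < s := (lt_sqrt (abs_nonneg A)).2 (by rw [sq_abs]; linarith)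
  obtain ⟨hsA, hAs⟩ := abs_lt.1 habs
  exact ⟨(-A - s) / 4, (-A + s) / 4, by linarith, by linarith, by linarith,
    by linear_combination hs / 8, by linear_combination hs / 8⟩

theorem hasDerivAt_deriv_add_mul_sq {A B : ℝ} {u : ℝ → ℝ} (hu : Differentiable ℝ u)
    (hu' : Differentiable ℝ (deriv u))
    (hode : ∀ t, deriv (deriv u) t = A * u t * deriv u t + B * u t ^ 3)
    {c : ℝ} (hc : 2 * c ^ 2 + A * c = B) (t : ℝ) :
    HasDerivAt (fun t => deriv u t + c * u t ^ 2)
      ((A + 2 * c) * u t * (deriv u t + c * u t ^ 2)) t := by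
  refine ((hu' t).hasDerivAt.add (((hu t).hasDerivAt.pow 2).const_mul c)).congr_deriv ?_
  rw [hode t]
  linear_combination -u t ^ 3 * hc

theorem eq_zero_of_deriv_deriv_eq {A B : ℝ} (hB : 0 < B) {u : ℝ → ℝ}
    (hu : Differentiable ℝ u) (hu' : Differentiable ℝ (deriv u))
    (hode : ∀ t, deriv (deriv u) t = A * u t * deriv u t + B * u t ^ 3) (t : ℝ) : u t = 0 := by
  obtain ⟨c₁, c₂, hc₁, hc₂, hγ, hroot₁, hroot₂⟩ := exists_roots_two_mul_sq_add_mul (A := A) hB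
  set U := fun t => ∫ s in (0 : ℝ)..t, u s
  have hU : ∀ t, HasDerivAt U (u t) t := fun t =>
    (hu.continuous.integral_hasStrictDerivAt 0 t).hasDerivAt
  obtain ⟨P, hP⟩ := exists_eq_mul_exp_of_hasDerivAt
    (hasDerivAt_deriv_add_mul_sq hu hu' hode hroot₂) fun t => (hU t).const_mul (A + 2 * c₂)
  obtain ⟨N, hN⟩ := exists_eq_mul_exp_of_hasDerivAt
    (hasDerivAt_deriv_add_mul_sq hu hu' hode hroot₁) fun t => (hU t).const_mul (A + 2 * c₁)
  rcases le_or_gt P 0 with hP₀ | hP₀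
  · refine eq_zero_of_deriv_le_neg_mul_sq hc₂ hu (fun t => ?_) t
    nlinarith [hP t, mul_nonpos_of_nonpos_of_nonneg hP₀ (exp_pos ((A + 2 * c₂) * U t)).le]
  rcases le_or_gt 0 N with hN₀ | hN₀
  · refine neg_eq_zero.1 (eq_zero_of_deriv_le_neg_mul_sq (f := fun t => -u t) (neg_pos.2 hc₁)
      hu.neg (fun t => ?_) t)
    rw [deriv.fun_neg]
    nlinarith [hN t, mul_nonneg hN₀ (exp_pos ((A + 2 * c₁) * U t)).le]
  -- `(c₂ - c₁) u² = P exp ((A + 2c₂) U) - N exp ((A + 2c₁) U) > P exp ((A + 2c₂) U)`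
  refine (false_of_mul_exp_le_sq (div_pos hP₀ (sub_pos.2 (hc₁.trans hc₂))) hγ hu.continuous hU
    fun t => ?_).elim
  rw [div_mul_eq_mul_div, div_le_iff₀ (sub_pos.2 (hc₁.trans hc₂))]
  nlinarith [hP t, hN t, mul_neg_of_neg_of_pos hN₀ (exp_pos ((A + 2 * c₁) * U t))]

section ColeHopf

variable {f : ℝ → ℝ}

theorem hasDerivAt_logDeriv (hf0 : ∀ t, f t ≠ 0) (hf : Differentiable ℝ f)
    (hf' : Differentiable ℝ (deriv f)) (t : ℝ) :
    HasDerivAt (logDeriv f) (deriv (deriv f) t / f t - logDeriv f t ^ 2) t := by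
  refine ((hf' t).hasDerivAt.div (hf t).hasDerivAt (hf0 t)).congr_deriv ?_
  rw [logDeriv_apply]
  field_simp [hf0 t]

theorem hasDerivAt_deriv_logDeriv (hf0 : ∀ t, f t ≠ 0) (hf : Differentiable ℝ f)
    (hf' : Differentiable ℝ (deriv f)) (hf'' : Differentiable ℝ (deriv (deriv f))) (t : ℝ) :
    HasDerivAt (deriv (logDeriv f))
      (deriv (deriv (deriv f)) t / f t - 3 * logDeriv f t * deriv (logDeriv f) t
        - logDeriv f t ^ 3) t := by
  have hL : deriv (logDeriv f) = fun t => deriv (deriv f) t / f t - logDeriv f t ^ 2 :=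
    funext fun t => (hasDerivAt_logDeriv hf0 hf hf' t).deriv
  rw [hL]
  refine (((hf'' t).hasDerivAt.div (hf t).hasDerivAt (hf0 t)).sub
    ((hasDerivAt_logDeriv hf0 hf hf' t).pow 2)).congr_deriv ?_
  simp only [logDeriv_apply, Nat.cast_ofNat, Nat.reduceSub, pow_one]
  field_simp [hf0 t]
  ring

theorem deriv_deriv_logDeriv_eq {k₁ k₂ : ℝ} (hf0 : ∀ t, f t ≠ 0) (hf : Differentiable ℝ f)
    (hf' : Differentiable ℝ (deriv f)) (hf'' : Differentiable ℝ (deriv (deriv f)))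
    (h : ∀ t, f t ^ 2 * deriv (deriv (deriv f)) t - k₁ * f t * deriv f t * deriv (deriv f) t
      + k₂ * deriv f t ^ 3 = 0) (t : ℝ) :
    deriv (deriv (logDeriv f)) t = (k₁ - 3) * logDeriv f t * deriv (logDeriv f) t
      + (k₁ - k₂ - 1) * logDeriv f t ^ 3 := by
  rw [(hasDerivAt_deriv_logDeriv hf0 hf hf' hf'' t).deriv,
    (hasDerivAt_logDeriv hf0 hf hf' t).deriv, logDeriv_apply]
  field_simp [hf0 t]
  linear_combination h t

end ColeHopf

theorem stmt_11_general (A B : ℝ) (hB : 0 < B) :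
    (∀ u : ℝ → ℝ, Differentiable ℝ u → Differentiable ℝ (deriv u) →
      (∀ t, deriv (deriv u) t = A * u t * deriv u t + B * (u t) ^ 3) →
      ∀ t, u t = 0)
    ∧
    (∀ m : ℤ, 9 ≤ m →
      ∀ f : ℝ → ℝ, (∀ t, 0 < f t) →
        Differentiable ℝ f → Differentiable ℝ (deriv f) →
        Differentiable ℝ (deriv (deriv f)) →
        (∀ t, (f t) ^ 2 * deriv (deriv (deriv f)) t
          - (2 * ((m:ℝ) + 1) / ((m:ℝ) - 2)) * f t * deriv f t * deriv (deriv f) t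
          + ((m:ℝ) ^ 2 / ((m:ℝ) - 2) ^ 2) * (deriv f t) ^ 3 = 0) →
        ∀ s t, f s = f t) := by
  refine ⟨fun u hu hu' hode => eq_zero_of_deriv_deriv_eq hB hu hu' hode, ?_⟩
  intro m hm f hfpos hf hf' hf'' heq
  have hm₉ : (9 : ℝ) ≤ m := by exact_mod_cast hm
  have hm₂ : (0 : ℝ) < m - 2 := by linarith
  have hB' : 0 < 2 * ((m : ℝ) + 1) / (m - 2) - m ^ 2 / (m - 2) ^ 2 - 1 := by
    rw [show 2 * ((m : ℝ) + 1) / (m - 2) - m ^ 2 / (m - 2) ^ 2 - 1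
      = 2 * (m - 4) / (m - 2) ^ 2 by field_simp; ring]
    exact div_pos (by linarith) (by positivity)
  have hf0 : ∀ t, f t ≠ 0 := fun t => (hfpos t).ne'
  have hlog : ∀ t, logDeriv f t = 0 := eq_zero_of_deriv_deriv_eq hB'
    (fun t => (hasDerivAt_logDeriv hf0 hf hf' t).differentiableAt)
    (fun t => (hasDerivAt_deriv_logDeriv hf0 hf hf' hf'' t).differentiableAt)
    (deriv_deriv_logDeriv_eq hf0 hf hf' hf'' heq)
  exact is_const_of_deriv_eq_zero hf fun t => by
    simpa [logDeriv_apply, hf0 t] using hlog t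

/-- A < 0, B > 0: only the trivial global solution; consequently for
m ≥ 9 every positive global solution of (1.1) is constant. -/
theorem stmt_11 (A B : ℝ) (hA : A < 0) (hB : 0 < B) :
    (∀ u : ℝ → ℝ, Differentiable ℝ u → Differentiable ℝ (deriv u) →
      (∀ t, deriv (deriv u) t = A * u t * deriv u t + B * (u t) ^ 3) →
      ∀ t, u t = 0)
    ∧
    (∀ m : ℤ, 9 ≤ m →
      ∀ f : ℝ → ℝ, (∀ t, 0 < f t) →
        Differentiable ℝ f → Differentiable ℝ (deriv f) →
        Differentiable ℝ (deriv (deriv f)) →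
        (∀ t, (f t) ^ 2 * deriv (deriv (deriv f)) t
          - (2 * ((m:ℝ) + 1) / ((m:ℝ) - 2)) * f t * deriv f t * deriv (deriv f) t
          + ((m:ℝ) ^ 2 / ((m:ℝ) - 2) ^ 2) * (deriv f t) ^ 3 = 0) →
        ∀ s t, f s = f t) :=
  stmt_11_general A B hB
end
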